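/- arXiv:1011.0515 — 2 statements merged into one kernel-verified Lean document; each statement's English description precedes it below -/
import Mathlib

section
/- For ρ = Σ_{i=1}^{d-1} λ_i Π_i + λ_d P⁺_d with λ_i ≥ 0 summing to 1, the partial transpose ρ^Γ is positive semidefinite if and only if λ_i λ_{d-i} ≥ λ_d² for all i = 1,...,d-1. -/
open Matrix Complex BigOperators ComplexOrder
open scoped ComplexConjugate

/-- `Π_i = (1/d) Σ_k |k, k+i⟩⟨k, k+i|` -/
noncomputable def PiOp (d : ℕ) (n : Fin d) : Matrix (Fin d × Fin d) (Fin d × Fin d) ℂ :=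
  (d : ℂ)⁻¹ • ∑ i : Fin d, Matrix.single (i, i + n) (i, i + n) 1

/-- `P⁺_d = (1/d) Σ_{ij} |ii⟩⟨jj|` -/
noncomputable def Pplus (d : ℕ) : Matrix (Fin d × Fin d) (Fin d × Fin d) ℂ :=
  (d : ℂ)⁻¹ • ∑ i : Fin d, ∑ j : Fin d, Matrix.single (i, i) (j, j) 1

/-- partial transpose on the second factor -/
def PT {d : ℕ} (ρ : Matrix (Fin d × Fin d) (Fin d × Fin d) ℂ) :
    Matrix (Fin d × Fin d) (Fin d × Fin d) ℂ :=
  fun p q => ρ (p.1, q.2) (q.1, p.2)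

/-!
Partial transposition keeps every `Π_i` diagonal and turns `P⁺_d` into `(1/d)·SWAP`, so
`d·ρ^Γ = D + λ_d·SWAP` with `D` diagonal, `D_(a,b) = λ_(b-a)` for `a ≠ b` and `D_(a,a) = 0`.
Since SWAP exchanges `|ab⟩` and `|ba⟩`, `ρ^Γ` is a direct sum of `1×1` blocks `λ_d` and of
`2×2` blocks `[[λ_(b-a), λ_d], [λ_d, λ_(a-b)]]`; such a block with nonnegative entries is positive
semidefinite iff its determinant `λ_(b-a) λ_(a-b) - λ_d²` is nonnegative.
-/

lemma quadratic_form_nonneg_of_sq_le_mul {A B c : ℝ} (hA : 0 ≤ A) (hB : 0 ≤ B)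
    (h : c ^ 2 ≤ A * B) (u v : ℝ) :
    0 ≤ A * u ^ 2 + B * v ^ 2 + 2 * c * u * v := by
  rcases hA.eq_or_lt with rfl | hA
  · obtain rfl : c = 0 := by nlinarith
    nlinarith
  · -- `A · (A u² + B v² + 2 c u v) = (A u + c v)² + (A B - c²) v²`
    have : 0 ≤ A * (A * u ^ 2 + B * v ^ 2 + 2 * c * u * v) := by
      nlinarith [sq_nonneg (A * u + c * v), mul_nonneg (sub_nonneg.2 h) (sq_nonneg v)]
    exact (mul_nonneg_iff_of_pos_left hA).1 this

lemma hermitian_form_nonneg_of_sq_le_mul {A B c : ℝ} (hA : 0 ≤ A) (hB : 0 ≤ B)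
    (h : c ^ 2 ≤ A * B) (s t : ℂ) :
    0 ≤ A * (conj s * s) + B * (conj t * t) + c * (conj s * t + conj t * s) := by
  -- the real part is the real form at `(re s, re t)` plus the one at `(im s, im t)`
  have hre := quadratic_form_nonneg_of_sq_le_mul hA hB h s.re t.re
  have him := quadratic_form_nonneg_of_sq_le_mul hA hB h s.im t.im
  rw [Complex.nonneg_iff]
  simp only [add_re, mul_re, ofReal_re, ofReal_im, conj_re, conj_im, add_im, mul_im, zero_mul]
  exact ⟨by linarith, by ring⟩

namespace Matrix

variable {ι : Type*} [DecidableEq ι] {σ : Equiv.Perm ι}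

lemma diagonal_add_smul_permMatrix_apply (α : ι → ℝ) (c : ℝ) (i j : ι) :
    (diagonal (fun i ↦ (α i : ℂ)) + (c : ℂ) • σ.permMatrix ℂ) i j =
      (if i = j then (α i : ℂ) else 0) + if σ i = j then (c : ℂ) else 0 := by
  simp [diagonal_apply, PEquiv.toMatrix_apply]

lemma isHermitian_diagonal_add_smul_permMatrix (hσ : Function.Involutive σ) (α : ι → ℝ) (c : ℝ) :
    (diagonal (fun i ↦ (α i : ℂ)) + (c : ℂ) • σ.permMatrix ℂ).IsHermitian := by
  ext i j
  simp only [conjTranspose_apply, diagonal_add_smul_permMatrix_apply, star_add, apply_ite star,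
    star_zero, Complex.star_def, conj_ofReal, eq_comm (a := i), hσ.eq_iff]
  rcases eq_or_ne j i with rfl | hji <;> simp [*]

lemma sq_le_mul_of_posSemidef_diagonal_add_smul_permMatrix (hσ : Function.Involutive σ)
    {α : ι → ℝ} {c : ℝ} (h : (diagonal (fun i ↦ (α i : ℂ)) + (c : ℂ) • σ.permMatrix ℂ).PosSemidef)
    {i : ι} (hi : σ i ≠ i) : c ^ 2 ≤ α i * α (σ i) := by
  have hdet := (h.submatrix ![i, σ i]).det_nonneg
  simp only [det_fin_two, submatrix_apply, Matrix.cons_val_zero, Matrix.cons_val_one,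
    diagonal_add_smul_permMatrix_apply, hσ i, hi, hi.symm, ↓reduceIte, add_zero, zero_add,
    sub_nonneg] at hdet
  rw [sq]
  exact_mod_cast hdet

variable [Fintype ι]

lemma dotProduct_diagonal_add_smul_permMatrix_mulVec (α : ι → ℝ) (c : ℝ) (x : ι → ℂ) :
    star x ⬝ᵥ ((diagonal (fun i ↦ (α i : ℂ)) + (c : ℂ) • σ.permMatrix ℂ) *ᵥ x) =
      ∑ i, ((α i : ℂ) * (conj (x i) * x i) + c * (conj (x i) * x (σ i))) := by
  simp only [add_mulVec, smul_mulVec, permMatrix_mulVec, dotProduct, Pi.add_apply,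
    mulVec_diagonal, Pi.smul_apply, Function.comp_apply, Pi.star_apply, Complex.star_def,
    smul_eq_mul]
  congr 1; ext i; ring

lemma posSemidef_diagonal_add_smul_permMatrix (hσ : Function.Involutive σ) {α : ι → ℝ} {c : ℝ}
    (hα : ∀ i, 0 ≤ α i) (hc : 0 ≤ c) (h : ∀ i, σ i ≠ i → c ^ 2 ≤ α i * α (σ i)) :
    (diagonal (fun i ↦ (α i : ℂ)) + (c : ℂ) • σ.permMatrix ℂ).PosSemidef := by
  refine .of_dotProduct_mulVec_nonneg (isHermitian_diagonal_add_smul_permMatrix hσ α c) fun x ↦ ?_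
  set f : ι → ℂ := fun i ↦ (α i : ℂ) * (conj (x i) * x i) + c * (conj (x i) * x (σ i))
  have hpair : ∀ i, 0 ≤ f i + f (σ i) := by
    intro i
    by_cases hi : σ i = i
    · have hf : f i + f (σ i) = 2 * ((α i + c : ℝ) : ℂ) * (conj (x i) * x i) := by
        simp only [f, hi]; push_cast; ring
      have hx : 0 ≤ conj (x i) * x i := by rw [conj_mul']; positivity
      rw [hf]
      exact mul_nonneg (mul_nonneg zero_le_two (by exact_mod_cast add_nonneg (hα i) hc)) hx
    · have := hermitian_form_nonneg_of_sq_le_mul (hα i) (hα (σ i)) (h i hi) (x i) (x (σ i))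
      simp only [f, hσ i]
      linear_combination this
  -- pairing each `i` with `σ i` counts every term of the form twice
  have hsum : ∑ i, (f i + f (σ i)) = 2 * ∑ i, f i := by
    rw [Finset.sum_add_distrib, Equiv.sum_comp σ f, two_mul]
  calc 0 ≤ (2 : ℂ)⁻¹ * ∑ i, (f i + f (σ i)) :=
        mul_nonneg (inv_nonneg.2 zero_le_two) (Finset.sum_nonneg fun i _ ↦ hpair i)
    _ = _ := by
        rw [hsum, inv_mul_cancel_left₀ two_ne_zero, dotProduct_diagonal_add_smul_permMatrix_mulVec]

theorem posSemidef_diagonal_add_smul_permMatrix_iff (hσ : Function.Involutive σ) {α : ι → ℝ}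
    {c : ℝ} (hα : ∀ i, 0 ≤ α i) (hc : 0 ≤ c) :
    (diagonal (fun i ↦ (α i : ℂ)) + (c : ℂ) • σ.permMatrix ℂ).PosSemidef ↔
      ∀ i, σ i ≠ i → c ^ 2 ≤ α i * α (σ i) :=
  ⟨fun h _ hi ↦ sq_le_mul_of_posSemidef_diagonal_add_smul_permMatrix hσ h hi,
    posSemidef_diagonal_add_smul_permMatrix hσ hα hc⟩

lemma posSemidef_smul_iff {𝕜 n : Type*} [RCLike 𝕜] {r : 𝕜} (hr : 0 < r) {M : Matrix n n 𝕜} :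
    (r • M).PosSemidef ↔ M.PosSemidef := by
  refine ⟨fun h ↦ ?_, fun h ↦ h.smul hr.le⟩
  simpa [smul_smul, hr.ne'] using h.smul (inv_nonneg.2 hr.le)

end Matrix

namespace Fin

variable {d : ℕ} [NeZero d]

lemma sum_Icc_one_sub_one {M : Type*} [AddCommMonoid M] (g : ℕ → M) :
    ∑ i ∈ Finset.Icc 1 (d - 1), g i = ∑ n : Fin d, if n = 0 then 0 else g n := by
  rw [Finset.sum_ite, Finset.sum_const_zero, zero_add]
  have hmod : ∀ i ∈ Finset.Icc 1 (d - 1), i % d = i := fun i hi ↦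
    Nat.mod_eq_of_lt (by simp at hi; omega)
  refine Finset.sum_nbij' (Fin.ofNat d ·) (·.val) (fun i hi ↦ ?_) (fun n hn ↦ ?_)
    (fun i hi ↦ by simp [hmod i hi]) (fun n _ ↦ by simp) (fun i hi ↦ by simp [hmod i hi])
  · have : Fin.ofNat d i ≠ 0 := by
      rw [Ne, Fin.ext_iff, Fin.val_ofNat, hmod i hi]
      simp only [Fin.val_zero]
      exact Nat.one_le_iff_ne_zero.1 (Finset.mem_Icc.1 hi).1
    simpa using this
  · have : (n : ℕ) ≠ 0 := Fin.val_ne_iff.2 (by simpa using hn)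
    simp only [Finset.mem_Icc]
    omega

lemma forall_swap_ne_iff {Q : Fin d → Fin d → Prop} :
    (∀ p : Fin d × Fin d, p.swap ≠ p → Q (p.2 - p.1) (p.1 - p.2)) ↔
      ∀ n : Fin d, n ≠ 0 → Q n (-n) := by
  refine ⟨fun h n hn ↦ ?_, fun h p hp ↦ ?_⟩
  · simpa using h (0, n) (by simpa [Prod.ext_iff, eq_comm] using hn)
  · rw [← neg_sub p.2 p.1]
    refine h _ (sub_ne_zero.2 fun h ↦ hp ?_)
    simp [Prod.ext_iff, h]

lemma forall_ne_zero_val_neg_iff {R : ℕ → ℕ → Prop} :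
    (∀ n : Fin d, n ≠ 0 → R n (-n : Fin d)) ↔ ∀ i, 1 ≤ i → i ≤ d - 1 → R i (d - i) := by
  refine ⟨fun h i hi₁ hi₂ ↦ ?_, fun h n hn ↦ ?_⟩
  · have hi : (Fin.ofNat d i : ℕ) = i := by rw [Fin.val_ofNat, Nat.mod_eq_of_lt (by omega)]
    have hne : Fin.ofNat d i ≠ 0 := by rw [Ne, Fin.ext_iff, hi]; simp; omega
    have := h _ hne
    rwa [Fin.val_neg, if_neg hne, hi] at this
  · have : (n : ℕ) ≠ 0 := Fin.val_ne_iff.2 (by simpa using hn)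
    rw [Fin.val_neg, if_neg hn]
    exact h n (by omega) (by omega)

end Fin

section PartialTranspose

variable {d : ℕ}

lemma PT_add (A B : Matrix (Fin d × Fin d) (Fin d × Fin d) ℂ) : PT (A + B) = PT A + PT B := rfl

lemma PT_smul (c : ℂ) (A : Matrix (Fin d × Fin d) (Fin d × Fin d) ℂ) : PT (c • A) = c • PT A := rfl

lemma PT_diagonal (v : Fin d × Fin d → ℂ) : PT (diagonal v) = diagonal v := by
  ext ⟨a, b⟩ ⟨a', b'⟩
  simp only [PT, diagonal_apply, Prod.mk.injEq]
  split_ifs <;> simp_all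

lemma PT_Pplus :
    PT (Pplus d) = (d : ℂ)⁻¹ • Equiv.Perm.permMatrix ℂ (Equiv.prodComm (Fin d) (Fin d)) := by
  ext ⟨a, b⟩ ⟨a', b'⟩
  simp only [PT, Pplus, Matrix.smul_apply, Matrix.sum_apply, single_apply, Prod.mk.injEq,
    smul_eq_mul, PEquiv.toMatrix_apply, Equiv.toPEquiv_apply, Option.mem_def, Option.some.injEq,
    Equiv.prodComm_apply, Prod.swap_prod_mk]
  rw [Finset.sum_eq_single a (fun i _ _ ↦ Finset.sum_eq_zero fun j _ ↦ if_neg (by tauto)) (by simp),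
    Finset.sum_eq_single a' (fun j _ _ ↦ if_neg (by tauto)) (by simp)]
  grind

variable [NeZero d]

lemma PiOp_eq_diagonal (n : Fin d) :
    PiOp d n = (d : ℂ)⁻¹ • diagonal (fun p ↦ if p.2 - p.1 = n then 1 else 0) := by
  ext ⟨a, b⟩ ⟨a', b'⟩
  simp only [PiOp, Matrix.smul_apply, Matrix.sum_apply, single_apply, diagonal_apply, Prod.mk.injEq,
    smul_eq_mul, sub_eq_iff_eq_add']
  rw [Finset.sum_eq_single a (fun i _ _ ↦ if_neg (by tauto)) (by simp)]
  grind

lemma sum_smul_PiOp (w : Fin d → ℂ) :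
    ∑ n, w n • PiOp d n = (d : ℂ)⁻¹ • diagonal (fun p ↦ w (p.2 - p.1)) := by
  ext p q
  simp [PiOp_eq_diagonal, Matrix.sum_apply, diagonal_apply, mul_comm]

lemma PT_sum_smul_PiOp_add_smul_Pplus (w : Fin d → ℂ) (c : ℂ) :
    PT (∑ n, w n • PiOp d n + c • Pplus d) =
      (d : ℂ)⁻¹ • (diagonal (fun p ↦ w (p.2 - p.1)) +
        c • Equiv.Perm.permMatrix ℂ (Equiv.prodComm (Fin d) (Fin d))) := by
  rw [PT_add, PT_smul, sum_smul_PiOp, PT_smul, PT_diagonal, PT_Pplus, smul_add, smul_comm c]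

end PartialTranspose

theorem PPT_iff_general (d : ℕ) [NeZero d] (lam : ℕ → ℝ)
    (hpos : ∀ i, 1 ≤ i → i ≤ d → 0 ≤ lam i) :
    (PT ((∑ i ∈ Finset.Icc 1 (d - 1), (lam i : ℂ) • PiOp d (Fin.ofNat d i)) +
        (lam d : ℂ) • Pplus d)).PosSemidef ↔
      ∀ i, 1 ≤ i → i ≤ d - 1 → lam d ^ 2 ≤ lam i * lam (d - i) := by
  set w : Fin d → ℝ := fun n ↦ if n = 0 then 0 else lam n
  have hw : ∀ n, 0 ≤ w n := fun n ↦ by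
    by_cases hn : n = 0
    · simp [w, hn]
    · simp only [w, if_neg hn]
      exact hpos _ (Nat.one_le_iff_ne_zero.2 (Fin.val_ne_iff.2 (by simpa using hn))) n.isLt.le
  have hsum : ∑ i ∈ Finset.Icc 1 (d - 1), (lam i : ℂ) • PiOp d (Fin.ofNat d i) =
      ∑ n, (w n : ℂ) • PiOp d n := by
    rw [Fin.sum_Icc_one_sub_one]
    refine Finset.sum_congr rfl fun n _ ↦ ?_
    by_cases hn : n = 0 <;> simp [w, hn]
  rw [hsum, PT_sum_smul_PiOp_add_smul_Pplus,
    posSemidef_smul_iff (inv_pos.2 (Nat.cast_pos.2 (NeZero.pos d))),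
    posSemidef_diagonal_add_smul_permMatrix_iff (fun p ↦ p.swap_swap) (fun _ ↦ hw _)
      (hpos d NeZero.one_le le_rfl)]
  simp only [Equiv.prodComm_apply, Prod.fst_swap, Prod.snd_swap]
  rw [Fin.forall_swap_ne_iff (Q := fun x y ↦ lam d ^ 2 ≤ w x * w y),
    ← Fin.forall_ne_zero_val_neg_iff (R := fun i j ↦ lam d ^ 2 ≤ lam i * lam j)]
  refine forall₂_congr fun n hn ↦ ?_
  simp [w, hn]

/-- `ρ = Σ_{i=1}^{d-1} λ_i Π_i + λ_d P⁺_d` is PPT iff `λ_i λ_{d-i} ≥ λ_d²` for all `i`. -/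
theorem PPT_iff (d : ℕ) [NeZero d] (hd : 2 ≤ d) (lam : ℕ → ℝ)
    (hpos : ∀ i, 1 ≤ i → i ≤ d → 0 ≤ lam i)
    (hsum : ∑ i ∈ Finset.Icc 1 d, lam i = 1) :
    (PT ((∑ i ∈ Finset.Icc 1 (d - 1), (lam i : ℂ) • PiOp d (Fin.ofNat d i)) +
        (lam d : ℂ) • Pplus d)).PosSemidef ↔
      ∀ i, 1 ≤ i → i ≤ d - 1 → lam d ^ 2 ≤ lam i * lam (d - i) :=
  PPT_iff_general d lam hpos
end

section
/- If ρ = Σ_{i=0}^{d-1} λ_i Π_i + λ_d P⁺_d with all λ_i ≥ 0, Σ_{i=0}^d λ_i = 1, and λ_i ≥ λ_d for i = 1,...,d-1, then ρ is separable, via the decomposition ρ = d·λ_d·ρ̃ + λ_0 Π_0 + Σ_{i=1}^{d-1}(λ_i - λ_d)Π_i. -/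
/-!
Up to normalisation, separable operators form the cone hull of the product states, and a cone
element of trace one is a separable state. Each `Π_i` is a nonnegative combination of product
basis projectors and `ρ̃` lies in the cone by hypothesis, so the decomposition
`ρ = d λ_d ρ̃ + λ_0 Π_0 + Σ_{i=1}^{d-1} (λ_i - λ_d) Π_i`, whose coefficients are nonnegative
because `λ_i ≥ λ_d`, puts `ρ` in the cone. Its trace is `Σ_i λ_i = 1`, as `Π_i` and `P⁺_d` have
unit trace.
-/

open Matrix Complex BigOperators ComplexOrder
open Fin.NatCast

/-- separability: being a convex combination of tensor products of states -/
def SepState {d : ℕ} (ρ : Matrix (Fin d × Fin d) (Fin d × Fin d) ℂ) : Prop :=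
  ∃ (k : ℕ) (w : Fin k → ℝ) (A B : Fin k → Matrix (Fin d) (Fin d) ℂ),
    (∀ i, 0 ≤ w i) ∧ (∑ i, w i) = 1 ∧
    (∀ i, (A i).PosSemidef ∧ (A i).trace = 1 ∧ (B i).PosSemidef ∧ (B i).trace = 1) ∧
    ρ = ∑ i, (w i : ℂ) • (Matrix.kroneckerMap (· * ·) (A i) (B i))

open scoped Kronecker

lemma posSemidef_single_self {n R : Type*} [DecidableEq n] [CommRing R] [PartialOrder R]
    [StarRing R] [StarOrderedRing R] (i : n) {c : R} (hc : 0 ≤ c) : (single i i c).PosSemidef := by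
  rw [← diagonal_single]
  exact .diagonal (Pi.single_nonneg.2 hc)

section ProductStates

variable {m n : Type*} [Fintype m] [Fintype n]

variable (m n) in
def productStates : Set (Matrix (m × n) (m × n) ℂ) :=
  {σ | ∃ A B : Matrix _ _ ℂ, (A.PosSemidef ∧ A.trace = 1 ∧ B.PosSemidef ∧ B.trace = 1) ∧ A ⊗ₖ B = σ}

lemma trace_eq_one_of_mem_productStates {σ : Matrix (m × n) (m × n) ℂ}
    (hσ : σ ∈ productStates m n) : σ.trace = 1 := by
  obtain ⟨A, B, ⟨-, hA, -, hB⟩, rfl⟩ := hσ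
  rw [trace_kronecker, hA, hB, one_mul]

lemma single_mem_productStates [DecidableEq m] [DecidableEq n] (i : m) (j : n) :
    single (i, j) (i, j) (1 : ℂ) ∈ productStates m n :=
  ⟨single i i 1, single j j 1,
    ⟨posSemidef_single_self i zero_le_one, trace_single_eq_same _ _,
      posSemidef_single_self j zero_le_one, trace_single_eq_same _ _⟩,
    by rw [single_kronecker_single, mul_one]⟩

end ProductStates

lemma PointedCone.ofReal_smul_mem {E : Type*} [AddCommGroup E] [Module ℂ E] [Module ℝ E]
    [IsScalarTower ℝ ℂ E] (C : PointedCone ℝ E) {x : ℝ} (hx : 0 ≤ x) {m : E} (hm : m ∈ C) :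
    (x : ℂ) • m ∈ C := by
  have hsmul : x • m = (x : ℂ) • m := by rw [← smul_one_smul ℂ x m, Complex.real_smul, mul_one]
  exact hsmul ▸ C.smul_mem hx hm

lemma sepState_iff_mem_hull_productStates {d : ℕ} {ρ : Matrix (Fin d × Fin d) (Fin d × Fin d) ℂ} :
    SepState ρ ↔ ρ ∈ PointedCone.hull ℝ (productStates (Fin d) (Fin d)) ∧ ρ.trace = 1 := by
  rw [PointedCone.hull, Submodule.mem_span_set']
  constructor
  · rintro ⟨k, w, A, B, hw, hsum, hAB, rfl⟩
    refine ⟨⟨k, fun i => ⟨w i, hw i⟩, fun i => ⟨A i ⊗ₖ B i, A i, B i, hAB i, rfl⟩, ?_⟩, ?_⟩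
    · simp only [Nonneg.mk_smul, Complex.coe_smul]
    · simp only [trace_sum, trace_smul, trace_kronecker, hAB, mul_one, smul_eq_mul]
      exact_mod_cast hsum
  · rintro ⟨⟨k, w, σ, rfl⟩, htr⟩
    choose A B hAB hσ using fun i => (σ i).2
    refine ⟨k, fun i => w i, A, B, fun i => (w i).2, ?_, hAB, ?_⟩
    · simp only [trace_sum, ← Nonneg.coe_smul, ← Complex.coe_smul, trace_smul,
        trace_eq_one_of_mem_productStates (σ _).2, smul_eq_mul, mul_one] at htr
      exact_mod_cast htr
    · simp only [hσ, ← Nonneg.coe_smul, ← Complex.coe_smul]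

lemma PiOp_mem_hull_productStates (d : ℕ) (n : Fin d) :
    PiOp d n ∈ PointedCone.hull ℝ (productStates (Fin d) (Fin d)) := by
  rw [PiOp, ← Complex.ofReal_natCast, ← Complex.ofReal_inv]
  exact PointedCone.ofReal_smul_mem _ (by positivity)
    (sum_mem fun i _ => PointedCone.subset_hull (single_mem_productStates _ _))

lemma trace_PiOp (d : ℕ) [NeZero d] (n : Fin d) : (PiOp d n).trace = 1 := by
  simp [PiOp, trace_sum]

lemma trace_Pplus (d : ℕ) [NeZero d] : (Pplus d).trace = 1 := by
  have htrace (i j : Fin d) : (single (i, i) (j, j) (1 : ℂ)).trace = if i = j then 1 else 0 := by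
    split_ifs with hij
    · rw [hij, trace_single_eq_same]
    · exact trace_single_eq_of_ne _ _ _ (by simpa using hij)
  simp [Pplus, trace_sum, htrace]

lemma sum_range_smul_add_smul_eq {K M : Type*} [Field K] [AddCommGroup M] [Module K M] {d : ℕ}
    (hd : (d : K) ≠ 0) (lam : ℕ → K) (Q : ℕ → M) (P : M) :
    (∑ i ∈ Finset.range d, lam i • Q i) + lam d • P =
      (d * lam d) • ((d : K)⁻¹ • ((∑ i ∈ Finset.Icc 1 (d - 1), Q i) + P)) + lam 0 • Q 0 +
        ∑ i ∈ Finset.Icc 1 (d - 1), (lam i - lam d) • Q i := by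
  have hd' : d ≠ 0 := by rintro rfl; exact hd Nat.cast_zero
  have hrange : Finset.range d = insert 0 (Finset.Icc 1 (d - 1)) := by
    ext i; simp only [Finset.mem_range, Finset.mem_insert, Finset.mem_Icc]; omega
  rw [hrange, Finset.sum_insert (by simp), smul_smul, mul_right_comm, mul_inv_cancel₀ hd, one_mul]
  simp only [sub_smul, Finset.sum_sub_distrib, smul_add, Finset.smul_sum]
  abel

theorem generalized_separable_general (d : ℕ) [NeZero d] (lam : ℕ → ℝ)
    (hpos : ∀ i, i ≤ d → 0 ≤ lam i)
    (hsum : ∑ i ∈ Finset.range (d + 1), lam i = 1)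
    (htilde : SepState ((d : ℂ)⁻¹ •
      ((∑ i ∈ Finset.Icc 1 (d - 1), PiOp d (i : Fin d)) + Pplus d)))
    (h : ∀ i, 1 ≤ i → i ≤ d - 1 → lam d ≤ lam i) :
    SepState ((∑ i ∈ Finset.range d, (lam i : ℂ) • PiOp d (i : Fin d)) +
      (lam d : ℂ) • Pplus d) := by
  set C := PointedCone.hull ℝ (productStates (Fin d) (Fin d))
  rw [sepState_iff_mem_hull_productStates] at htilde ⊢
  constructor
  · rw [sum_range_smul_add_smul_eq (NeZero.ne _)]
    refine add_mem (add_mem ?_ ?_) (sum_mem fun i hi => ?_)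
    · rw [← Complex.ofReal_natCast, ← Complex.ofReal_mul]
      exact C.ofReal_smul_mem (mul_nonneg d.cast_nonneg (hpos d le_rfl)) htilde.1
    · exact C.ofReal_smul_mem (hpos 0 (Nat.zero_le _)) (PiOp_mem_hull_productStates _ _)
    · rw [Finset.mem_Icc] at hi
      rw [← Complex.ofReal_sub]
      exact C.ofReal_smul_mem (sub_nonneg.2 (h i hi.1 hi.2)) (PiOp_mem_hull_productStates _ _)
  · simp only [trace_add, trace_sum, trace_smul, trace_PiOp, trace_Pplus, smul_eq_mul, mul_one]
    exact_mod_cast (Finset.sum_range_succ lam d).symm.trans hsum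

/-- If `λ_i ≥ 0`, `Σ_{i=0}^d λ_i = 1` and `λ_i ≥ λ_d` for `i = 1,…,d-1`, then
`ρ = Σ_{i=0}^{d-1} λ_i Π_i + λ_d P⁺_d` is separable (given separability of
`ρ̃ = (1/d)(Σ_{i=1}^{d-1} Π_i + P⁺_d)`). -/
theorem generalized_separable (d : ℕ) [NeZero d] (hd : 2 ≤ d) (lam : ℕ → ℝ)
    (hpos : ∀ i, i ≤ d → 0 ≤ lam i)
    (hsum : ∑ i ∈ Finset.range (d + 1), lam i = 1)
    (htilde : SepState ((d : ℂ)⁻¹ •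
      ((∑ i ∈ Finset.Icc 1 (d - 1), PiOp d (i : Fin d)) + Pplus d)))
    (h : ∀ i, 1 ≤ i → i ≤ d - 1 → lam d ≤ lam i) :
    SepState ((∑ i ∈ Finset.range d, (lam i : ℂ) • PiOp d (i : Fin d)) +
      (lam d : ℂ) • Pplus d) :=
  generalized_separable_general d lam hpos hsum htilde h
end
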